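/- arXiv:1506.08080 — 4 statements merged into one kernel-verified Lean document; each statement's English description precedes it below -/
import Mathlib

section
/- For a complete, orientable, finite-area hyperbolic surface S and x ∈ S, the injectivity radius of S at x equals half the minimum edge length of the Delaunay tessellation of (S, x); in particular, every geodesic arc based at x of length 2·injrad_x(S) is a Delaunay edge. -/
/-!
STATEMENT 8: For a complete, orientable, finite-area hyperbolic surface S and x ∈ S, the
injectivity radius of S at x equals half the minimum edge length of the Delaunay
tessellation of (S, x); in particular, every geodesic arc based at x of length
2·injrad_x(S) is a Delaunay edge.

Setting: S = ℍ/Γ for a subgroup Γ ≤ SL(2,ℝ) acting properly discontinuously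
(metrically) and freely on the upper half-plane; the preimage of x is the orbit S̃ = Γ·xt
of a lift xt, and r = injrad_x(S) is half the minimal displacement of xt.  Geodesic arcs
in S based at x correspond to pairs (xt, p) with p ∈ S̃, of length dist(xt, p).  A
Delaunay edge of (S,x) at x corresponds (via the empty circumcircles condition) to a pair
of points of S̃ lying on a circle bounding a disk meeting S̃ only in its boundary; edges
of minimal length arise from circles meeting S̃ in exactly two points, which is the
predicate recorded below.  The conclusion: 2r is the least length of such a Delaunay edge
at xt, and every p ∈ S̃ with dist(xt,p) = 2r spans a Delaunay edge with xt.
-/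

open UpperHalfPlane

section Aux
open Real
set_option maxHeartbeats 1000000


/-- Euclidean distance between the Euclidean centers of two hyperbolic circles of radius `r`
around points at hyperbolic distance `2r`. -/
lemma centers_dist (xt p : ℍ) {r : ℝ} (hr : 0 < r) (h : dist xt p = 2 * r) :
    dist ((xt.center r : ℍ) : ℂ) ((p.center r : ℍ) : ℂ) = (xt.im + p.im) * Real.sinh r := by
  have hx := xt.im_pos
  have hp := p.im_pos
  have hcosh := UpperHalfPlane.cosh_dist' xt p
  rw [h] at hcosh
  have h1 : 2 * xt.im * p.im * Real.cosh (2 * r)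
      = (xt.re - p.re) ^ 2 + xt.im ^ 2 + p.im ^ 2 := by
    rw [hcosh]; field_simp
  have hsq : dist ((xt.center r : ℍ) : ℂ) ((p.center r : ℍ) : ℂ) ^ 2
      = ((xt.im + p.im) * Real.sinh r) ^ 2 := by
    rw [Complex.dist_eq, Complex.sq_norm, Complex.normSq_apply]
    simp only [Complex.sub_re, Complex.sub_im, UpperHalfPlane.coe_re, UpperHalfPlane.coe_im,
      UpperHalfPlane.center_re, UpperHalfPlane.center_im]
    linear_combination (-1 : ℝ) * h1 + (2 * xt.im * p.im) * Real.cosh_two_mul r + (xt.im ^ 2 + p.im ^ 2) * Real.cosh_sq r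
  have h2 : 0 ≤ (xt.im + p.im) * Real.sinh r :=
    mul_nonneg (by positivity) (le_of_lt (Real.sinh_pos_iff.mpr hr))
  calc dist ((xt.center r : ℍ) : ℂ) ((p.center r : ℍ) : ℂ)
      = √(dist ((xt.center r : ℍ) : ℂ) ((p.center r : ℍ) : ℂ) ^ 2) :=
        (Real.sqrt_sq dist_nonneg).symm
    _ = (xt.im + p.im) * Real.sinh r := by rw [hsq, Real.sqrt_sq h2]

/-- Internally tangent circles meet in at most one point. -/
lemma tangency_unique {γ Ξ : ℂ} {ρ d : ℝ} (hρ : 0 < ρ) (hγΞ : dist γ Ξ = d) (hd : 0 < d)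
    {a b : ℂ} (ha1 : dist a γ = ρ) (ha2 : dist a Ξ = ρ + d)
    (hb1 : dist b γ = ρ) (hb2 : dist b Ξ = ρ + d) : a = b := by
  suffices key : ∀ z : ℂ, dist z γ = ρ → dist z Ξ = ρ + d → z = γ + (ρ / d) • (γ - Ξ) by
    rw [key a ha1 ha2, key b hb1 hb2]
  intro z h1 h2
  have hzγ : z - γ ≠ 0 := by
    intro hc
    rw [dist_eq_norm, hc, norm_zero] at h1
    exact hρ.ne h1
  have hγΞ0 : γ - Ξ ≠ 0 := by
    intro hc
    rw [dist_eq_norm, hc, norm_zero] at hγΞ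
    exact hd.ne hγΞ
  have hray : SameRay ℝ (z - γ) (γ - Ξ) := by
    rw [sameRay_iff_norm_add, sub_add_sub_cancel, ← dist_eq_norm, ← dist_eq_norm, ← dist_eq_norm,
      h1, h2, hγΞ]
  obtain ⟨r₁, r₂, hr₁, hr₂, hEq⟩ := hray.exists_pos hzγ hγΞ0
  have h3 : z - γ = (r₂ / r₁) • (γ - Ξ) := by
    rw [div_eq_inv_mul, mul_smul, ← hEq, inv_smul_smul₀ hr₁.ne']
  have h4 : r₂ / r₁ * d = ρ := by
    have h5 := congrArg norm h3
    rw [norm_smul, ← dist_eq_norm z γ, ← dist_eq_norm γ Ξ, h1, hγΞ,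
      Real.norm_eq_abs, abs_of_pos (div_pos hr₂ hr₁)] at h5
    linarith
  have h6 : r₂ / r₁ = ρ / d := by field_simp at h4 ⊢; linarith
  rw [h6] at h3
  rw [← h3]; ring

end Aux


/-- `p` and `q` span a Delaunay edge of the locally finite set `A`: they are the exact
intersection of `A` with a metric circle bounding a disk containing no other point
of `A` (empty circumcircle condition). -/
def IsDelaunayEdge (A : Set UpperHalfPlane) (p q : UpperHalfPlane) : Prop :=
  p ≠ q ∧ ∃ (c : UpperHalfPlane) (R : ℝ), 0 < R ∧
    A ∩ Metric.closedBall c R = A ∩ Metric.sphere c R ∧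
    A ∩ Metric.sphere c R = {p, q}

set_option maxHeartbeats 1000000 in
theorem injrad_eq_half_min_Delaunay_edge_length
    (Γ : Subgroup (Matrix.SpecialLinearGroup (Fin 2) ℝ))
    (hdisc : ∀ z : UpperHalfPlane, ∀ c : ℝ, Set.Finite {g : Γ | dist z (g • z) ≤ c})
    (hfree : ∀ g : Γ, g ≠ 1 → ∀ z : UpperHalfPlane, g • z ≠ z)
    (xt : UpperHalfPlane) (r : ℝ) (hr : 0 < r)
    -- r = injrad_x(S): half the minimal displacement of the lift xt of x
    (hinj : ∀ g : Γ, g ≠ 1 → 2 * r ≤ dist xt (g • xt))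
    (hmin : ∃ g₀ : Γ, g₀ ≠ 1 ∧ dist xt (g₀ • xt) = 2 * r) :
    -- every geodesic arc based at x of length 2·injrad_x(S) is a Delaunay edge, and
    (∀ p ∈ MulAction.orbit Γ xt, dist xt p = 2 * r →
      IsDelaunayEdge (MulAction.orbit Γ xt) xt p) ∧
    -- 2·injrad_x(S) is the minimum length of a Delaunay edge based at x:
    IsLeast {ℓ : ℝ | ∃ p, IsDelaunayEdge (MulAction.orbit Γ xt) xt p ∧ ℓ = dist xt p}
      (2 * r) := by
  have hxtA : xt ∈ MulAction.orbit Γ xt := MulAction.mem_orbit_self xt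
  -- orbit separation
  have hsep : ∀ a ∈ MulAction.orbit Γ xt, ∀ b ∈ MulAction.orbit Γ xt, a ≠ b → 2 * r ≤ dist a b := by
    rintro a ⟨g, rfl⟩ b ⟨h, rfl⟩ hne
    have hgh : (g⁻¹ * h : Γ) ≠ 1 := by
      intro hc
      exact hne (by rw [inv_mul_eq_one.mp hc])
    have h1 := hinj (g⁻¹ * h) hgh
    have h2 : dist (g • xt) (h • xt) = dist xt ((g⁻¹ * h : Γ) • xt) := by
      show dist ((g : Matrix.SpecialLinearGroup (Fin 2) ℝ) • xt)
          ((h : Matrix.SpecialLinearGroup (Fin 2) ℝ) • xt)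
        = dist xt (((g : Matrix.SpecialLinearGroup (Fin 2) ℝ)⁻¹
            * (h : Matrix.SpecialLinearGroup (Fin 2) ℝ)) • xt)
      rw [← dist_smul ((g : Matrix.SpecialLinearGroup (Fin 2) ℝ)⁻¹), inv_smul_smul, smul_smul]
    rw [h2]; exact h1
  have hsinh : 0 < Real.sinh r := Real.sinh_pos_iff.mpr hr
  -- the main construction
  have key : ∀ p ∈ MulAction.orbit Γ xt, dist xt p = 2 * r →
      IsDelaunayEdge (MulAction.orbit Γ xt) xt p := by
    intro p hp hdist
    have hne : xt ≠ p := by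
      intro hc; rw [← hc, dist_self] at hdist; linarith
    have hs : 0 < xt.im + p.im := by positivity
    have hcd := centers_dist xt p hr hdist
    set ξx : ℂ := ((xt.center r : ℍ) : ℂ) with hξx
    set ξp : ℂ := ((p.center r : ℍ) : ℂ) with hξp
    set t : ℝ := xt.im / (xt.im + p.im) with ht
    set cC : ℂ := ξx + t • (ξp - ξx) with hcC
    have hcim : 0 < cC.im := by
      have h1 : cC.im = xt.im * Real.cosh r + t * (p.im * Real.cosh r - xt.im * Real.cosh r) := by
        rw [hcC, hξx, hξp]
        simp only [Complex.add_im, Complex.real_smul, Complex.mul_im, Complex.sub_im,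
          Complex.ofReal_re, Complex.ofReal_im, UpperHalfPlane.coe_im,
          UpperHalfPlane.center_im]
        ring
      have h2 : xt.im * Real.cosh r + t * (p.im * Real.cosh r - xt.im * Real.cosh r)
          = (2 * xt.im * p.im / (xt.im + p.im)) * Real.cosh r := by
        rw [ht]; field_simp; ring
      rw [h1, h2]
      have hcosh := Real.cosh_pos r
      have hx := xt.im_pos
      have hpim := p.im_pos
      positivity
    obtain ⟨c, hcoe⟩ : ∃ c : ℍ, (c : ℂ) = cC := ⟨UpperHalfPlane.mk cC hcim, rfl⟩
    -- dist c xt = r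
    have hcx : dist c xt = r := by
      rw [UpperHalfPlane.dist_eq_iff_dist_coe_center_eq, hcoe]
      have h1 : cC - ξx = t • (ξp - ξx) := by rw [hcC]; ring
      rw [dist_eq_norm, h1, norm_smul, Real.norm_eq_abs,
        abs_of_pos (div_pos xt.im_pos hs), ← dist_eq_norm, dist_comm, hcd]
      field_simp
    have hcp : dist c p = r := by
      rw [UpperHalfPlane.dist_eq_iff_dist_coe_center_eq, hcoe]
      have h1 : cC - ξp = (t - 1) • (ξp - ξx) := by
        rw [hcC, sub_smul, one_smul]; ring
      rw [dist_eq_norm, h1, norm_smul, Real.norm_eq_abs, ← dist_eq_norm, dist_comm, hcd]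
      have habs : |t - 1| = p.im / (xt.im + p.im) := by
        rw [abs_sub_comm, abs_of_pos]
        · rw [ht]; field_simp; ring
        · rw [ht, sub_pos, div_lt_one hs]; linarith [p.im_pos]
      rw [habs]; field_simp
    refine ⟨hne, c, r, hr, ?_, ?_⟩
    · -- closed ball ∩ A = sphere ∩ A
      apply Set.Subset.antisymm
      · rintro a ⟨haA, hab⟩
        refine ⟨haA, ?_⟩
        rcases eq_or_ne a xt with rfl | hax
        · show dist a c = r
          rw [dist_comm]; exact hcx
        · have h1 : 2 * r ≤ dist a xt := hsep a haA xt hxtA hax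
          have h2 : dist a xt ≤ dist a c + dist c xt := dist_triangle a c xt
          have h3 : dist a c ≤ r := hab
          show dist a c = r
          rw [hcx] at h2
          linarith
      · exact Set.inter_subset_inter_right _ Metric.sphere_subset_closedBall
    · -- sphere ∩ A = {xt, p}
      apply Set.Subset.antisymm
      · rintro a ⟨haA, has⟩
        have hac : dist a c = r := has
        rcases eq_or_ne a xt with rfl | hax
        · exact Set.mem_insert a {p}
        right
        -- dist a xt = 2r
        have h1 : 2 * r ≤ dist a xt := hsep a haA xt hxtA hax
        have h2 : dist a xt ≤ 2 * r := by
          have := dist_triangle a c xt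
          rw [hac, hcx] at this; linarith
        have hax2 : dist a xt = 2 * r := le_antisymm h2 h1
        -- Euclidean tangency uniqueness
        set γ : ℂ := ((c.center r : ℍ) : ℂ) with hγ
        set Ξ : ℂ := ((xt.center (2 * r) : ℍ) : ℂ) with hΞ
        set ρ : ℝ := c.im * Real.sinh r with hρdef
        set σ : ℝ := xt.im * Real.sinh (2 * r) with hσdef
        have hρ : 0 < ρ := mul_pos c.im_pos hsinh
        have hσ : 0 < σ := mul_pos xt.im_pos (Real.sinh_pos_iff.mpr (by linarith))
        have haγ : dist (a : ℂ) γ = ρ := UpperHalfPlane.dist_eq_iff_dist_coe_center_eq.mp hac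
        have haΞ : dist (a : ℂ) Ξ = σ := UpperHalfPlane.dist_eq_iff_dist_coe_center_eq.mp hax2
        have hpγ : dist (p : ℂ) γ = ρ :=
          UpperHalfPlane.dist_eq_iff_dist_coe_center_eq.mp (dist_comm c p ▸ hcp)
        have hpΞ : dist (p : ℂ) Ξ = σ :=
          UpperHalfPlane.dist_eq_iff_dist_coe_center_eq.mp (dist_comm xt p ▸ hdist)
        by_cases hγΞ : γ = Ξ
        · exfalso
          have hρσ : ρ = σ := by rw [← haγ, hγΞ, haΞ]
          have hre : c.im * Real.cosh r = xt.im * Real.cosh (2 * r) := by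
            have := congrArg Complex.im hγΞ
            simpa [hγ, hΞ, UpperHalfPlane.coe_im] using this
          have him : c.im = xt.im := by
            have h4 : c.im ^ 2 = xt.im ^ 2 := by
              have e1 := Real.cosh_sq_sub_sinh_sq r
              have e2 := Real.cosh_sq_sub_sinh_sq (2 * r)
              have hss : c.im * Real.sinh r = xt.im * Real.sinh (2 * r) := by
                rw [← hρdef, ← hσdef]; exact hρσ
              linear_combination (-(c.im ^ 2)) * e1 + xt.im ^ 2 * e2
                + (c.im * Real.cosh r + xt.im * Real.cosh (2 * r)) * hre
                - (c.im * Real.sinh r + xt.im * Real.sinh (2 * r)) * hss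
            have := c.im_pos
            have := xt.im_pos
            nlinarith
          rw [him] at hre
          have hcc : Real.cosh r = Real.cosh (2 * r) :=
            mul_left_cancel₀ xt.im_pos.ne' hre
          have : Real.cosh r < Real.cosh (2 * r) := by
            rw [Real.cosh_lt_cosh, abs_of_pos hr, abs_of_pos (by linarith : (0:ℝ) < 2 * r)]
            linarith
          linarith
        · -- nesting : dist γ Ξ = σ - ρ
          have hdΞpos : 0 < dist γ Ξ := dist_pos.mpr hγΞ
          set k : ℝ := ρ / dist γ Ξ with hk
          set zC : ℂ := γ + k • (γ - Ξ) with hzC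
          have hzγ : dist zC γ = ρ := by
            have h5 : zC - γ = k • (γ - Ξ) := by rw [hzC]; ring
            rw [dist_eq_norm, h5, norm_smul, Real.norm_eq_abs,
              abs_of_pos (div_pos hρ hdΞpos), ← dist_eq_norm]
            exact div_mul_cancel₀ ρ hdΞpos.ne'
          have hzim : 0 < zC.im := by
            apply UpperHalfPlane.im_pos_of_dist_center_le (z := c) (r := r) (w := zC)
            rw [← hγ, ← hρdef]
            exact le_of_eq hzγ
          obtain ⟨z, hzcoe⟩ : ∃ z : ℍ, (z : ℂ) = zC := ⟨UpperHalfPlane.mk zC hzim, rfl⟩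
          have hzc : dist z c = r := by
            rw [UpperHalfPlane.dist_eq_iff_dist_coe_center_eq, hzcoe]
            exact hzγ
          have hz2 : dist z xt ≤ 2 * r := by
            have := dist_triangle z c xt
            rw [hzc, hcx] at this; linarith
          have hz3 : dist zC Ξ ≤ σ := by
            have h6 := UpperHalfPlane.dist_le_iff_dist_coe_center_le.mp hz2
            rw [hzcoe] at h6
            exact h6
          have hz4 : dist zC Ξ = dist γ Ξ + ρ := by
            have h5 : zC - Ξ = (1 + k) • (γ - Ξ) := by
              rw [hzC, add_smul, one_smul]; ring
            rw [dist_eq_norm, h5, norm_smul, Real.norm_eq_abs,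
              abs_of_pos (by positivity : (0:ℝ) < 1 + k), ← dist_eq_norm, hk]
            field_simp
          have hd1 : dist γ Ξ ≤ σ - ρ := by linarith
          have hd2 : σ ≤ ρ + dist γ Ξ := by
            have := dist_triangle (a : ℂ) γ Ξ
            rw [haγ, haΞ] at this; linarith
          have hdΞ : dist γ Ξ = σ - ρ := le_antisymm hd1 (by linarith)
          have hcoeap : (a : ℂ) = (p : ℂ) := by
            apply tangency_unique hρ hdΞ (by linarith) haγ (by linarith) hpγ (by linarith)
          exact UpperHalfPlane.ext hcoeap
      · rintro a (rfl | rfl)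
        · exact ⟨hxtA, show dist a c = r from dist_comm c a ▸ hcx⟩
        · exact ⟨hp, show dist a c = r from dist_comm c a ▸ hcp⟩
  refine ⟨key, ?_, ?_⟩
  · obtain ⟨g₀, hg₀, hdg₀⟩ := hmin
    exact ⟨g₀ • xt, key _ (MulAction.mem_orbit xt g₀) hdg₀, hdg₀.symm⟩
  · rintro ℓ ⟨p, ⟨hnep, c, R, hR, hball, hsphere⟩, rfl⟩
    have hpA : p ∈ MulAction.orbit Γ xt := by
      have : p ∈ MulAction.orbit Γ xt ∩ Metric.sphere c R := by
        rw [hsphere]; exact Set.mem_insert_of_mem _ rfl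
      exact this.1
    exact hsep xt hxtA p hpA hnep
end

section
/- The area of a horocyclic ideal triangle with finite side of length d equals π − 2·arcsin(1/cosh(d/2)). -/
/-!
STATEMENT 13: The area of a horocyclic ideal triangle with finite side of length d equals
π − 2·arcsin(1/cosh(d/2)).

Upper half-plane model, hyperbolic area element dx dy / y².  The horocyclic ideal
triangle with finite vertices i and θ + i (θ = 2 sinh(d/2), so the finite side has
hyperbolic length d) and ideal vertex ∞ is the region 0 ≤ x ≤ θ above the geodesic
from i to θ + i, i.e. above the Euclidean circle centered at (sinh(d/2), 0) of radius
cosh(d/2).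
-/

open Real MeasureTheory

/-- The horocyclic ideal triangle with finite side of length `d`, as a subset of the upper
half-plane (coordinates in ℝ × ℝ). -/
def horoIdealTriangle (d : ℝ) : Set (ℝ × ℝ) :=
  {p | 0 ≤ p.1 ∧ p.1 ≤ 2 * Real.sinh (d / 2) ∧ 0 < p.2 ∧
    Real.cosh (d / 2) ^ 2 ≤ (p.1 - Real.sinh (d / 2)) ^ 2 + p.2 ^ 2}

open Set in
private lemma inner_int {c : ℝ} (hc : 0 < c) : ∫ y in Ici c, 1 / y ^ 2 = 1 / c := by
  rw [integral_Ici_eq_integral_Ioi]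
  rw [setIntegral_congr_fun measurableSet_Ioi (g := fun y : ℝ => y ^ (-2 : ℝ))
    (fun y hy => by
      have hy0 : 0 < y := hc.trans hy
      show 1 / y ^ 2 = y ^ (-2 : ℝ)
      rw [Real.rpow_neg hy0.le, one_div, show ((2:ℝ)) = ((2:ℕ):ℝ) by norm_num,
        Real.rpow_natCast])]
  rw [integral_Ioi_rpow_of_lt (by norm_num) hc]
  norm_num [Real.rpow_neg_one]

open Set in
private lemma bound_int : IntegrableOn (fun y : ℝ => 1 / y ^ 2) (Ici 1) := by
  rw [integrableOn_Ici_iff_integrableOn_Ioi]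
  refine ((integrableOn_Ioi_rpow_of_lt (by norm_num : (-2:ℝ) < -1) one_pos).congr_fun
    (fun y hy => ?_) measurableSet_Ioi)
  have hy0 : 0 < y := lt_trans one_pos hy
  show y ^ (-2 : ℝ) = 1 / y ^ 2
  rw [Real.rpow_neg hy0.le, one_div, show ((2:ℝ)) = ((2:ℕ):ℝ) by norm_num, Real.rpow_natCast]

open Set in
private lemma outer_int {s R : ℝ} (hs : 0 < s) (hsR : s ^ 2 + 1 = R ^ 2) (hR : 0 < R) :
    ∫ x in Icc 0 (2 * s), 1 / Real.sqrt (R ^ 2 - (x - s) ^ 2) = 2 * arcsin (s / R) := by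
  have hsltR : s < R := by nlinarith
  have key : ∀ x ∈ uIcc 0 (2 * s),
      HasDerivAt (fun x => arcsin ((x - s) / R)) (1 / Real.sqrt (R ^ 2 - (x - s) ^ 2)) x := by
    intro x hx
    rw [uIcc_of_le (by positivity)] at hx
    have habs : |x - s| ≤ s := abs_le.2 ⟨by linarith [hx.1], by linarith [hx.2]⟩
    have hu : |(x - s) / R| < 1 := by
      rw [abs_div, abs_of_pos hR, div_lt_one hR]
      exact lt_of_le_of_lt habs hsltR
    have h1 : (x - s) / R ≠ -1 := by intro h; rw [h] at hu; norm_num at hu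
    have h2 : (x - s) / R ≠ 1 := by intro h; rw [h] at hu; norm_num at hu
    have hinner : HasDerivAt (fun x : ℝ => (x - s) / R) (1 / R) x := by
      simpa using ((hasDerivAt_id x).sub_const s).div_const R
    have := (Real.hasDerivAt_arcsin h1 h2).comp x hinner
    refine this.congr_deriv ?_
    symm
    have hlt : ((x - s) / R) ^ 2 < 1 := by
      rw [← sq_abs]; nlinarith [abs_nonneg ((x - s) / R)]
    have hnn : (0:ℝ) ≤ 1 - ((x - s) / R) ^ 2 := by linarith
    have hkey : Real.sqrt (R ^ 2 - (x - s) ^ 2)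
        = Real.sqrt (1 - ((x - s) / R) ^ 2) * R := by
      rw [show R ^ 2 - (x - s) ^ 2 = (1 - ((x - s) / R) ^ 2) * R ^ 2 by
        field_simp, Real.sqrt_mul hnn, Real.sqrt_sq hR.le]
    have hspos : 0 < Real.sqrt (1 - ((x - s) / R) ^ 2) := by
      apply Real.sqrt_pos.2; linarith
    rw [hkey]
    rw [one_div, mul_inv]
    ring
  have hcont : ContinuousOn (fun x => 1 / Real.sqrt (R ^ 2 - (x - s) ^ 2)) (uIcc 0 (2 * s)) := by
    apply ContinuousOn.div continuousOn_const
    · exact ((continuous_const.sub ((continuous_id.sub continuous_const).pow 2)).sqrt).continuousOn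
    · intro x hx
      rw [uIcc_of_le (by positivity)] at hx
      have habs : |x - s| ≤ s := abs_le.2 ⟨by linarith [hx.1], by linarith [hx.2]⟩
      have : (x - s) ^ 2 ≤ s ^ 2 := sq_le_sq' (abs_le.1 habs).1 (abs_le.1 habs).2
      have : (0:ℝ) < R ^ 2 - (x - s) ^ 2 := by nlinarith
      positivity
  rw [MeasureTheory.integral_Icc_eq_integral_Ioc,
    ← intervalIntegral.integral_of_le (by positivity : (0:ℝ) ≤ 2 * s)]
  rw [intervalIntegral.integral_eq_sub_of_hasDerivAt key (hcont.intervalIntegrable)]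
  rw [show (2 * s - s) / R = s / R by ring, show (0 - s) / R = -(s / R) by ring, arcsin_neg]
  ring

open Set in
private lemma arcsin_compl {s R : ℝ} (hs : 0 < s) (hsR : s ^ 2 + 1 = R ^ 2) (hR : 0 < R) :
    2 * arcsin (s / R) = π - 2 * arcsin (1 / R) := by
  have h1 : arccos (1 / R) = arcsin (Real.sqrt (1 - (1 / R) ^ 2)) :=
    Real.arccos_eq_arcsin (by positivity)
  have h2 : Real.sqrt (1 - (1 / R) ^ 2) = s / R := by
    rw [show 1 - (1 / R) ^ 2 = (s / R) ^ 2 by field_simp; linarith]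
    exact Real.sqrt_sq (by positivity)
  have h3 := Real.arccos_eq_pi_div_two_sub_arcsin (1 / R)
  rw [h2] at h1
  rw [h1] at h3
  linarith

open Set in
private lemma main_aux {s R : ℝ} (hs : 0 < s) (hsR : s ^ 2 + 1 = R ^ 2) (hR : 0 < R) :
    ∫ p in {p : ℝ × ℝ | 0 ≤ p.1 ∧ p.1 ≤ 2 * s ∧ 0 < p.2 ∧ R ^ 2 ≤ (p.1 - s) ^ 2 + p.2 ^ 2},
      (1 / p.2 ^ 2) = π - 2 * arcsin (1 / R) := by
  set g : ℝ → ℝ := fun x => Real.sqrt (R ^ 2 - (x - s) ^ 2) with hg_def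
  set S : Set (ℝ × ℝ) :=
    {p : ℝ × ℝ | 0 ≤ p.1 ∧ p.1 ≤ 2 * s ∧ 0 < p.2 ∧ R ^ 2 ≤ (p.1 - s) ^ 2 + p.2 ^ 2} with hS_def
  have hg1 : ∀ x ∈ Icc 0 (2 * s), 1 ≤ g x := by
    intro x hx
    have habs : (x - s) ^ 2 ≤ s ^ 2 := sq_le_sq' (by linarith [hx.1]) (by linarith [hx.2])
    have h1 : (1:ℝ) ≤ R ^ 2 - (x - s) ^ 2 := by nlinarith
    calc (1:ℝ) = Real.sqrt 1 := Real.sqrt_one.symm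
      _ ≤ g x := Real.sqrt_le_sqrt h1
  have hgpos : ∀ x ∈ Icc 0 (2 * s), 0 < g x := fun x hx => lt_of_lt_of_le one_pos (hg1 x hx)
  have hSeq : S = {p : ℝ × ℝ | p.1 ∈ Icc 0 (2 * s) ∧ g p.1 ≤ p.2} := by
    ext ⟨x, y⟩
    simp only [hS_def, Set.mem_setOf_eq, Set.mem_Icc]
    constructor
    · rintro ⟨h1, h2, h3, h4⟩
      refine ⟨⟨h1, h2⟩, ?_⟩
      calc g x ≤ Real.sqrt (y ^ 2) := Real.sqrt_le_sqrt (by linarith)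
        _ = y := Real.sqrt_sq h3.le
    · rintro ⟨⟨h1, h2⟩, hge⟩
      have hy1 : (1:ℝ) ≤ y := le_trans (hg1 x ⟨h1, h2⟩) hge
      have hsq : R ^ 2 - (x - s) ^ 2 ≤ y ^ 2 := by
        have h0 : (0:ℝ) ≤ R ^ 2 - (x - s) ^ 2 := by
          have := hg1 x ⟨h1, h2⟩
          nlinarith [Real.sqrt_nonneg (R ^ 2 - (x - s) ^ 2),
            Real.sq_sqrt (le_of_lt (Real.sqrt_pos.1 (hgpos x ⟨h1, h2⟩)))]
        calc R ^ 2 - (x - s) ^ 2 = g x ^ 2 := (Real.sq_sqrt h0).symm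
          _ ≤ y ^ 2 := pow_le_pow_left₀ (Real.sqrt_nonneg _) hge 2
      exact ⟨h1, h2, lt_of_lt_of_le one_pos hy1, by linarith⟩
  have hgcont : Continuous g :=
    (continuous_const.sub ((continuous_id.sub continuous_const).pow 2)).sqrt
  have hmeas : MeasurableSet S := by
    rw [hSeq]
    exact (measurable_fst measurableSet_Icc).inter
      (isClosed_le (hgcont.comp continuous_fst) continuous_snd).measurableSet
  have hfmeas : Measurable fun p : ℝ × ℝ => 1 / p.2 ^ 2 :=
    measurable_const.div (measurable_snd.pow_const 2)
  -- integrable bound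
  have hbound1 : Integrable ((Icc (0:ℝ) (2 * s)).indicator fun _ => (1:ℝ)) :=
    (integrableOn_const measure_Icc_lt_top.ne).integrable_indicator measurableSet_Icc
  have hbound2 : Integrable ((Ici (1:ℝ)).indicator fun y => 1 / y ^ 2) :=
    bound_int.integrable_indicator measurableSet_Ici
  have hG : Integrable (fun p : ℝ × ℝ =>
      ((Icc (0:ℝ) (2 * s)).indicator fun _ => (1:ℝ)) p.1 *
        ((Ici (1:ℝ)).indicator fun y => 1 / y ^ 2) p.2) := by
    rw [MeasureTheory.Measure.volume_eq_prod ℝ ℝ]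
    exact hbound1.mul_prod hbound2
  have hint : Integrable (S.indicator fun p : ℝ × ℝ => 1 / p.2 ^ 2) := by
    refine hG.mono (hfmeas.indicator hmeas).aestronglyMeasurable ?_
    filter_upwards with p
    by_cases hp : p ∈ S
    · rw [Set.indicator_of_mem hp]
      rw [hSeq] at hp
      obtain ⟨hx, hy⟩ := hp
      have hy1 : p.2 ∈ Ici (1:ℝ) := le_trans (hg1 _ hx) hy
      rw [Set.indicator_of_mem hx, Set.indicator_of_mem hy1, one_mul]
    · rw [Set.indicator_of_notMem hp]
      simp only [norm_zero]
      positivity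
  have step1 : ∫ p in S, (1 / p.2 ^ 2) = ∫ x in Icc 0 (2 * s), 1 / g x := by
    rw [← MeasureTheory.integral_indicator hmeas, MeasureTheory.Measure.volume_eq_prod ℝ ℝ]
    rw [MeasureTheory.Measure.volume_eq_prod ℝ ℝ] at hint
    rw [MeasureTheory.integral_prod _ hint]
    rw [← MeasureTheory.integral_indicator measurableSet_Icc]
    congr 1
    funext x
    by_cases hx : x ∈ Icc 0 (2 * s)
    · rw [Set.indicator_of_mem hx]
      have heq : (fun y => S.indicator (fun p : ℝ × ℝ => 1 / p.2 ^ 2) (x, y))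
          = (Ici (g x)).indicator fun y => 1 / y ^ 2 := by
        funext y
        by_cases hy : g x ≤ y
        · rw [Set.indicator_of_mem (by rw [hSeq]; exact ⟨hx, hy⟩),
            Set.indicator_of_mem (Set.mem_Ici.2 hy)]
        · rw [Set.indicator_of_notMem (by rw [hSeq]; exact fun h => hy h.2),
            Set.indicator_of_notMem (fun h => hy (Set.mem_Ici.1 h))]
      rw [heq, MeasureTheory.integral_indicator measurableSet_Ici, inner_int (hgpos x hx)]
    · rw [Set.indicator_of_notMem hx]
      have heq : (fun y => S.indicator (fun p : ℝ × ℝ => 1 / p.2 ^ 2) (x, y))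
          = fun _ => (0:ℝ) := by
        funext y
        exact Set.indicator_of_notMem (by rw [hSeq]; exact fun h => hx h.1) _
      rw [heq, integral_zero]
  rw [step1, outer_int hs hsR hR, arcsin_compl hs hsR hR]

theorem horocyclic_ideal_triangle_area (d : ℝ) (hd : 0 < d) :
    ∫ p in horoIdealTriangle d, (1 / p.2 ^ 2) =
      π - 2 * Real.arcsin (1 / Real.cosh (d / 2)) := by
  have hs : 0 < Real.sinh (d / 2) := Real.sinh_pos_iff.2 (by linarith)
  have hsR : Real.sinh (d / 2) ^ 2 + 1 = Real.cosh (d / 2) ^ 2 := (Real.cosh_sq (d / 2)).symm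
  exact main_aux hs hsR (Real.cosh_pos _)
end

section
/- For a hyperbolic triangle with side lengths (a, b, c) satisfying the strict triangle inequalities, with area D₀(a,b,c) = π − α − β − γ and circumradius J (when the triangle is cyclic), the partial derivative of D₀ with respect to a satisfies ∂D₀/∂a = ± sqrt(1/cosh²(a/2) − 1/cosh²J), with sign + if the side of length a does not separate the triangle's interior from the circumcenter and − otherwise; in particular ∂D₀/∂a = 0 exactly when a = 2J. -/
/-!
STATEMENT 15: For a cyclic hyperbolic triangle with side lengths (a,b,c) satisfying the
strict triangle inequalities, with area D₀(a,b,c) = π − α − β − γ and circumradius J,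
  ∂D₀/∂a = ± sqrt(1/cosh²(a/2) − 1/cosh² J),
with sign + if the side of length a does not separate the triangle's interior from the
circumcenter and − otherwise; in particular ∂D₀/∂a = 0 exactly when a = 2J.

The circumscribed data is encoded by the central angles θa, θb, θc ∈ (0, 2π) subtended at
the circumcenter by the three sides: they sum to 2π and satisfy the chord relations
sinh(a/2) = sinh J · sin(θa/2), etc.  The side of length a fails to separate the interior
from the circumcenter exactly when θa ≤ π, and separates exactly when θa ≥ π (with
θa = π the boundary case a = 2J, where both signs give derivative 0).
-/

open Real

noncomputable section

/-- Interior angle opposite the side of length `a`, via the hyperbolic law of cosines. -/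
def triAngle (a b c : ℝ) : ℝ :=
  Real.arccos ((Real.cosh b * Real.cosh c - Real.cosh a) / (Real.sinh b * Real.sinh c))

/-- The area of the compact hyperbolic triangle with side lengths `a`, `b`, `c`. -/
def D₀ (a b c : ℝ) : ℝ := π - (triAngle a b c + triAngle b c a + triAngle c a b)

set_option maxHeartbeats 2000000 in
theorem deriv_D₀ (a b c J θa θb θc : ℝ)
    (ha : 0 < a) (hb : 0 < b) (hc : 0 < c)
    (hab : a < b + c) (hbc : b < a + c) (hca : c < a + b)
    (hJ : 0 < J)
    (hθa : θa ∈ Set.Ioo 0 (2 * π)) (hθb : θb ∈ Set.Ioo 0 (2 * π))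
    (hθc : θc ∈ Set.Ioo 0 (2 * π)) (hsum : θa + θb + θc = 2 * π)
    (hcha : Real.sinh (a / 2) = Real.sinh J * Real.sin (θa / 2))
    (hchb : Real.sinh (b / 2) = Real.sinh J * Real.sin (θb / 2))
    (hchc : Real.sinh (c / 2) = Real.sinh J * Real.sin (θc / 2)) :
    -- + sign when the side of length a does not separate the interior from the center:
    (θa ≤ π → HasDerivAt (fun t => D₀ t b c)
      (Real.sqrt (1 / Real.cosh (a / 2) ^ 2 - 1 / Real.cosh J ^ 2)) a) ∧
    -- − sign when it does separate:
    (π ≤ θa → HasDerivAt (fun t => D₀ t b c)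
      (-Real.sqrt (1 / Real.cosh (a / 2) ^ 2 - 1 / Real.cosh J ^ 2)) a) ∧
    -- the derivative vanishes exactly when a is a diameter of the circumcircle:
    (deriv (fun t => D₀ t b c) a = 0 ↔ a = 2 * J) := by
  have hpi := Real.pi_pos
  set S := Real.sinh J with hS_def
  set x := Real.sin (θa / 2) with hx_def
  set y := Real.sin (θb / 2) with hy_def
  set z := Real.sin (θc / 2) with hz_def
  set cx := Real.cos (θa / 2) with hcx_def
  set cy := Real.cos (θb / 2) with hcy_def
  set cz := Real.cos (θc / 2) with hcz_def
  set Ca := Real.cosh (a / 2) with hCa_def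
  set Cb := Real.cosh (b / 2) with hCb_def
  set Cc := Real.cosh (c / 2) with hCc_def
  set KJ := Real.cosh J with hKJ_def
  obtain ⟨hθa1, hθa2⟩ := hθa
  obtain ⟨hθb1, hθb2⟩ := hθb
  obtain ⟨hθc1, hθc2⟩ := hθc
  have hS : 0 < S := Real.sinh_pos_iff.mpr hJ
  have hx0 : 0 < x := Real.sin_pos_of_pos_of_lt_pi (by linarith) (by linarith)
  have hy0 : 0 < y := Real.sin_pos_of_pos_of_lt_pi (by linarith) (by linarith)
  have hz0 : 0 < z := Real.sin_pos_of_pos_of_lt_pi (by linarith) (by linarith)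
  have hKJ : 0 < KJ := Real.cosh_pos J
  have hCa : 0 < Ca := Real.cosh_pos _
  have hCb : 0 < Cb := Real.cosh_pos _
  have hCc : 0 < Cc := Real.cosh_pos _
  have hsb : Real.sinh b = 2 * (S * y) * Cb := by
    have h := Real.sinh_two_mul (b / 2)
    rw [show 2 * (b / 2) = b by ring] at h
    rw [h, hchb]
  have hsc : Real.sinh c = 2 * (S * z) * Cc := by
    have h := Real.sinh_two_mul (c / 2)
    rw [show 2 * (c / 2) = c by ring] at h
    rw [h, hchc]
  have hsa : Real.sinh a = 2 * (S * x) * Ca := by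
    have h := Real.sinh_two_mul (a / 2)
    rw [show 2 * (a / 2) = a by ring] at h
    rw [h, hcha]
  have hCa2 : Ca ^ 2 = 1 + S ^ 2 * x ^ 2 := by
    rw [hCa_def, Real.cosh_sq', hcha]; ring
  have hCb2 : Cb ^ 2 = 1 + S ^ 2 * y ^ 2 := by
    rw [hCb_def, Real.cosh_sq', hchb]; ring
  have hCc2 : Cc ^ 2 = 1 + S ^ 2 * z ^ 2 := by
    rw [hCc_def, Real.cosh_sq', hchc]; ring
  have hKJ2 : KJ ^ 2 = 1 + S ^ 2 := by
    rw [hKJ_def, Real.cosh_sq', hS_def]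
  have hcca : Real.cosh a = 1 + 2 * S ^ 2 * x ^ 2 := by
    have h := Real.cosh_two_mul (a / 2)
    rw [show 2 * (a / 2) = a by ring] at h
    rw [h, Real.cosh_sq', hcha]; ring
  have hccb : Real.cosh b = 1 + 2 * S ^ 2 * y ^ 2 := by
    have h := Real.cosh_two_mul (b / 2)
    rw [show 2 * (b / 2) = b by ring] at h
    rw [h, Real.cosh_sq', hchb]; ring
  have hccc : Real.cosh c = 1 + 2 * S ^ 2 * z ^ 2 := by
    have h := Real.cosh_two_mul (c / 2)
    rw [show 2 * (c / 2) = c by ring] at h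
    rw [h, Real.cosh_sq', hchc]; ring
  -- Pythagorean identities
  have hpx : cx ^ 2 = 1 - x ^ 2 := by
    have := Real.sin_sq_add_cos_sq (θa / 2); rw [← hx_def, ← hcx_def] at this; linarith
  have hpy : cy ^ 2 = 1 - y ^ 2 := by
    have := Real.sin_sq_add_cos_sq (θb / 2); rw [← hy_def, ← hcy_def] at this; linarith
  have hpz : cz ^ 2 = 1 - z ^ 2 := by
    have := Real.sin_sq_add_cos_sq (θc / 2); rw [← hz_def, ← hcz_def] at this; linarith
  -- angle-sum relations
  have hxr : x = y * cz + cy * z := by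
    rw [hx_def, show θa / 2 = π - (θb / 2 + θc / 2) by linarith, Real.sin_pi_sub, Real.sin_add]
  have hyr : y = x * cz + cx * z := by
    rw [hy_def, show θb / 2 = π - (θa / 2 + θc / 2) by linarith, Real.sin_pi_sub, Real.sin_add]
  have hzr : z = x * cy + cx * y := by
    rw [hz_def, show θc / 2 = π - (θa / 2 + θb / 2) by linarith, Real.sin_pi_sub, Real.sin_add]
  have hcxr : cx = y * z - cy * cz := by
    rw [hcx_def, show θa / 2 = π - (θb / 2 + θc / 2) by linarith, Real.cos_pi_sub, Real.cos_add]
    ring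
  have hcyr : cy = x * z - cx * cz := by
    rw [hcy_def, show θb / 2 = π - (θa / 2 + θc / 2) by linarith, Real.cos_pi_sub, Real.cos_add]
    ring
  have hczr : cz = x * y - cx * cy := by
    rw [hcz_def, show θc / 2 = π - (θa / 2 + θb / 2) by linarith, Real.cos_pi_sub, Real.cos_add]
    ring
  have hsbne : Real.sinh b ≠ 0 := by rw [hsb]; positivity
  have hscne : Real.sinh c ≠ 0 := by rw [hsc]; positivity
  have hsane : Real.sinh a ≠ 0 := by rw [hsa]; positivity
  -- small structural relations
  have h1 : x ^ 2 = y ^ 2 + z ^ 2 - 2 * y * z * cx := by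
    linear_combination (x + z * cy + y * cz) * hxr + (2 * y * z) * hcxr + z ^ 2 * hpy + y ^ 2 * hpz
  have h2 : y ^ 2 = x ^ 2 + z ^ 2 - 2 * x * z * cy := by
    linear_combination (cz * x + z * cx + y) * hyr + (2 * z * x) * hcyr + z ^ 2 * hpx + x ^ 2 * hpz
  have h3 : z ^ 2 = x ^ 2 + y ^ 2 - 2 * x * y * cz := by
    linear_combination (cy * x + z + y * cx) * hzr + (2 * y * x) * hczr + y ^ 2 * hpx + x ^ 2 * hpy
  have hnum1 : Real.cosh b * Real.cosh c - Real.cosh a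
      = 4 * S ^ 2 * (y * z) * (cx + S ^ 2 * (y * z)) := by
    rw [hcca, hccb, hccc]; linear_combination (-2 * S ^ 2) * h1
  have hnum2 : Real.cosh c * Real.cosh a - Real.cosh b
      = 4 * S ^ 2 * (z * x) * (cy + S ^ 2 * (z * x)) := by
    rw [hcca, hccb, hccc]; linear_combination (-2 * S ^ 2) * h2
  have hnum3 : Real.cosh a * Real.cosh b - Real.cosh c
      = 4 * S ^ 2 * (x * y) * (cz + S ^ 2 * (x * y)) := by
    rw [hcca, hccb, hccc]; linear_combination (-2 * S ^ 2) * h3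
  have key1 : (Cb * Cc) ^ 2 - (cx + S ^ 2 * (y * z)) ^ 2 = (KJ * x) ^ 2 := by
    linear_combination Cc ^ 2 * hCb2 + (1 + S ^ 2 * y ^ 2) * hCc2 - x ^ 2 * hKJ2 - hpx - S ^ 2 * h1
  have key2 : (Cc * Ca) ^ 2 - (cy + S ^ 2 * (z * x)) ^ 2 = (KJ * y) ^ 2 := by
    linear_combination Ca ^ 2 * hCc2 + (1 + S ^ 2 * z ^ 2) * hCa2 - y ^ 2 * hKJ2 - hpy - S ^ 2 * h2
  have key3 : (Ca * Cb) ^ 2 - (cz + S ^ 2 * (x * y)) ^ 2 = (KJ * z) ^ 2 := by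
    linear_combination Cb ^ 2 * hCa2 + (1 + S ^ 2 * x ^ 2) * hCb2 - z ^ 2 * hKJ2 - hpz - S ^ 2 * h3
  have sq1 : 1 - ((Real.cosh b * Real.cosh c - Real.cosh a) / (Real.sinh b * Real.sinh c)) ^ 2
      = (KJ * x / (Cb * Cc)) ^ 2 := by
    rw [hnum1, hsb, hsc]
    field_simp
    linear_combination 16 * key1
  have sq2 : 1 - ((Real.cosh c * Real.cosh a - Real.cosh b) / (Real.sinh c * Real.sinh a)) ^ 2
      = (KJ * y / (Cc * Ca)) ^ 2 := by
    rw [hnum2, hsc, hsa]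
    field_simp
    linear_combination 16 * key2
  have sq3 : 1 - ((Real.cosh a * Real.cosh b - Real.cosh c) / (Real.sinh a * Real.sinh b)) ^ 2
      = (KJ * z / (Ca * Cb)) ^ 2 := by
    rw [hnum3, hsa, hsb]
    field_simp
    linear_combination 16 * key3
  -- arguments of arccos are strictly inside (-1,1)
  set q1 : ℝ := (Real.cosh b * Real.cosh c - Real.cosh a) / (Real.sinh b * Real.sinh c) with hq1_def
  set q2 : ℝ := (Real.cosh c * Real.cosh a - Real.cosh b) / (Real.sinh c * Real.sinh a) with hq2_def
  set q3 : ℝ := (Real.cosh a * Real.cosh b - Real.cosh c) / (Real.sinh a * Real.sinh b) with hq3_def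
  have hlt1 : q1 ^ 2 < 1 := by
    have hpos : 0 < (KJ * x / (Cb * Cc)) ^ 2 := by positivity
    linarith [sq1]
  have hlt2 : q2 ^ 2 < 1 := by
    have hpos : 0 < (KJ * y / (Cc * Ca)) ^ 2 := by positivity
    linarith [sq2]
  have hlt3 : q3 ^ 2 < 1 := by
    have hpos : 0 < (KJ * z / (Ca * Cb)) ^ 2 := by positivity
    linarith [sq3]
  have hne1 : q1 ≠ -1 := by intro h; rw [h] at hlt1; norm_num at hlt1
  have hne1' : q1 ≠ 1 := by intro h; rw [h] at hlt1; norm_num at hlt1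
  have hne2 : q2 ≠ -1 := by intro h; rw [h] at hlt2; norm_num at hlt2
  have hne2' : q2 ≠ 1 := by intro h; rw [h] at hlt2; norm_num at hlt2
  have hne3 : q3 ≠ -1 := by intro h; rw [h] at hlt3; norm_num at hlt3
  have hne3' : q3 ≠ 1 := by intro h; rw [h] at hlt3; norm_num at hlt3
  -- closed forms for the sines
  have r1 : Real.sqrt (1 - q1 ^ 2) = KJ * x / (Cb * Cc) := by
    rw [hq1_def, sq1]; exact Real.sqrt_sq (by positivity)
  have r2 : Real.sqrt (1 - q2 ^ 2) = KJ * y / (Cc * Ca) := by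
    rw [hq2_def, sq2]; exact Real.sqrt_sq (by positivity)
  have r3 : Real.sqrt (1 - q3 ^ 2) = KJ * z / (Ca * Cb) := by
    rw [hq3_def, sq3]; exact Real.sqrt_sq (by positivity)
  -- derivatives of the inner maps
  have hg1 : HasDerivAt (fun t : ℝ => (Real.cosh b * Real.cosh c - Real.cosh t) / (Real.sinh b * Real.sinh c))
      (-Real.sinh a / (Real.sinh b * Real.sinh c)) a := by
    simpa using ((Real.hasDerivAt_cosh a).const_sub (Real.cosh b * Real.cosh c)).div_const (Real.sinh b * Real.sinh c)
  have hvne : Real.sinh c * Real.sinh a ≠ 0 := mul_ne_zero hscne hsane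
  have hvne' : Real.sinh a * Real.sinh b ≠ 0 := mul_ne_zero hsane hsbne
  have hg2 : HasDerivAt (fun t : ℝ => (Real.cosh c * Real.cosh t - Real.cosh b) / (Real.sinh c * Real.sinh t))
      ((Real.cosh c * Real.sinh a * (Real.sinh c * Real.sinh a) -
        (Real.cosh c * Real.cosh a - Real.cosh b) * (Real.sinh c * Real.cosh a)) / (Real.sinh c * Real.sinh a) ^ 2) a :=
    (((Real.hasDerivAt_cosh a).const_mul (Real.cosh c)).sub_const (Real.cosh b)).div
      ((Real.hasDerivAt_sinh a).const_mul (Real.sinh c)) hvne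
  have hg3 : HasDerivAt (fun t : ℝ => (Real.cosh t * Real.cosh b - Real.cosh c) / (Real.sinh t * Real.sinh b))
      ((Real.sinh a * Real.cosh b * (Real.sinh a * Real.sinh b) -
        (Real.cosh a * Real.cosh b - Real.cosh c) * (Real.cosh a * Real.sinh b)) / (Real.sinh a * Real.sinh b) ^ 2) a :=
    (((Real.hasDerivAt_cosh a).mul_const (Real.cosh b)).sub_const (Real.cosh c)).div
      ((Real.hasDerivAt_sinh a).mul_const (Real.sinh b)) hvne'
  have hA : HasDerivAt (fun t : ℝ => Real.arccos ((Real.cosh b * Real.cosh c - Real.cosh t) / (Real.sinh b * Real.sinh c)))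
      (-(1 / Real.sqrt (1 - q1 ^ 2)) * (-Real.sinh a / (Real.sinh b * Real.sinh c))) a := by
    simpa [Function.comp_def] using (Real.hasDerivAt_arccos hne1 hne1').comp a hg1
  have hB : HasDerivAt (fun t : ℝ => Real.arccos ((Real.cosh c * Real.cosh t - Real.cosh b) / (Real.sinh c * Real.sinh t)))
      (-(1 / Real.sqrt (1 - q2 ^ 2)) * ((Real.cosh c * Real.sinh a * (Real.sinh c * Real.sinh a) -
        (Real.cosh c * Real.cosh a - Real.cosh b) * (Real.sinh c * Real.cosh a)) / (Real.sinh c * Real.sinh a) ^ 2)) a := by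
    simpa [Function.comp_def] using (Real.hasDerivAt_arccos hne2 hne2').comp a hg2
  have hC : HasDerivAt (fun t : ℝ => Real.arccos ((Real.cosh t * Real.cosh b - Real.cosh c) / (Real.sinh t * Real.sinh b)))
      (-(1 / Real.sqrt (1 - q3 ^ 2)) * ((Real.sinh a * Real.cosh b * (Real.sinh a * Real.sinh b) -
        (Real.cosh a * Real.cosh b - Real.cosh c) * (Real.cosh a * Real.sinh b)) / (Real.sinh a * Real.sinh b) ^ 2)) a := by
    simpa [Function.comp_def] using (Real.hasDerivAt_arccos hne3 hne3').comp a hg3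
  have hder : HasDerivAt (fun t => D₀ t b c)
      (-((-(1 / Real.sqrt (1 - q1 ^ 2)) * (-Real.sinh a / (Real.sinh b * Real.sinh c))) +
        (-(1 / Real.sqrt (1 - q2 ^ 2)) * ((Real.cosh c * Real.sinh a * (Real.sinh c * Real.sinh a) -
          (Real.cosh c * Real.cosh a - Real.cosh b) * (Real.sinh c * Real.cosh a)) / (Real.sinh c * Real.sinh a) ^ 2)) +
        (-(1 / Real.sqrt (1 - q3 ^ 2)) * ((Real.sinh a * Real.cosh b * (Real.sinh a * Real.sinh b) -
          (Real.cosh a * Real.cosh b - Real.cosh c) * (Real.cosh a * Real.sinh b)) / (Real.sinh a * Real.sinh b) ^ 2)))) a := by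
    have h := ((hA.add hB).add hC).const_sub π
    simpa only [D₀, triAngle, Pi.add_apply] using h
  have t1 : -(1 / (KJ * x / (Cb * Cc))) * (-Real.sinh a / (Real.sinh b * Real.sinh c))
      = Ca / (2 * S * y * z * KJ) := by
    rw [hsa, hsb, hsc]; field_simp
  have t2 : -(1 / (KJ * y / (Cc * Ca))) * ((Real.cosh c * Real.sinh a * (Real.sinh c * Real.sinh a) -
        (Real.cosh c * Real.cosh a - Real.cosh b) * (Real.sinh c * Real.cosh a)) / (Real.sinh c * Real.sinh a) ^ 2)
      = -((cz + S ^ 2 * (x * y)) / (2 * S * x * z * Ca * KJ)) := by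
    rw [hnum2, hcca, hccc, hsa, hsc]
    field_simp
    linear_combination 4 * (-x * (1 + 2 * S ^ 2 * z ^ 2) * hCa2 - hxr + S ^ 2 * x * h2)
  have t3 : -(1 / (KJ * z / (Ca * Cb))) * ((Real.sinh a * Real.cosh b * (Real.sinh a * Real.sinh b) -
        (Real.cosh a * Real.cosh b - Real.cosh c) * (Real.cosh a * Real.sinh b)) / (Real.sinh a * Real.sinh b) ^ 2)
      = -((cy + S ^ 2 * (z * x)) / (2 * S * x * y * Ca * KJ)) := by
    rw [hnum3, hcca, hccb, hsa, hsb]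
    field_simp
    linear_combination 4 * (-x * (1 + 2 * S ^ 2 * y ^ 2) * hCa2 - hxr + S ^ 2 * x * h3)
  have hVeq : (-((-(1 / Real.sqrt (1 - q1 ^ 2)) * (-Real.sinh a / (Real.sinh b * Real.sinh c))) +
        (-(1 / Real.sqrt (1 - q2 ^ 2)) * ((Real.cosh c * Real.sinh a * (Real.sinh c * Real.sinh a) -
          (Real.cosh c * Real.cosh a - Real.cosh b) * (Real.sinh c * Real.cosh a)) / (Real.sinh c * Real.sinh a) ^ 2)) +
        (-(1 / Real.sqrt (1 - q3 ^ 2)) * ((Real.sinh a * Real.cosh b * (Real.sinh a * Real.sinh b) -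
          (Real.cosh a * Real.cosh b - Real.cosh c) * (Real.cosh a * Real.sinh b)) / (Real.sinh a * Real.sinh b) ^ 2))))
      = S * cx / (Ca * KJ) := by
    rw [r1, r2, r3, t1, t2, t3]
    field_simp
    linear_combination -x * hCa2 - hxr - S ^ 2 * x * h1
  have master : HasDerivAt (fun t => D₀ t b c) (S * cx / (Ca * KJ)) a := hVeq ▸ hder
  have hradic : 1 / Ca ^ 2 - 1 / KJ ^ 2 = (S * cx / (Ca * KJ)) ^ 2 := by
    field_simp
    linear_combination hKJ2 - hCa2 - S ^ 2 * hpx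
  refine ⟨?_, ?_, ?_⟩
  · intro hle
    have hcx0 : 0 ≤ cx := Real.cos_nonneg_of_mem_Icc ⟨by linarith, by linarith⟩
    have hs : Real.sqrt (1 / Ca ^ 2 - 1 / KJ ^ 2) = S * cx / (Ca * KJ) := by
      rw [hradic, Real.sqrt_sq (by positivity)]
    rw [hs]; exact master
  · intro hge
    have hcx0 : cx ≤ 0 :=
      Real.cos_nonpos_of_pi_div_two_le_of_le (by linarith) (by linarith)
    have hval : S * cx / (Ca * KJ) ≤ 0 :=
      div_nonpos_of_nonpos_of_nonneg (mul_nonpos_of_nonneg_of_nonpos hS.le hcx0)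
        (by positivity)
    have hs : Real.sqrt (1 / Ca ^ 2 - 1 / KJ ^ 2) = -(S * cx / (Ca * KJ)) := by
      rw [hradic, Real.sqrt_sq_eq_abs, abs_of_nonpos hval]
    rw [hs, neg_neg]; exact master
  · have hdval : deriv (fun t => D₀ t b c) a = S * cx / (Ca * KJ) := master.deriv
    rw [hdval]
    constructor
    · intro h0
      rw [div_eq_zero_iff] at h0
      rcases h0 with h0 | h0
      · rcases mul_eq_zero.1 h0 with h0 | h0
        · exact absurd h0 (ne_of_gt hS)
        · -- cx = 0 forces x = 1 hence a = 2J
          have hx2 : (x - 1) * (x + 1) = 0 := by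
            linear_combination hpx - cx * h0
          rcases mul_eq_zero.1 hx2 with h1' | h1'
          · have hx1 : x = 1 := by linarith
            have : Real.sinh (a / 2) = Real.sinh J := by rw [hcha, hx1, hS_def]; ring
            have := Real.sinh_injective this
            linarith
          · linarith
      · exact absurd h0 (by positivity)
    · intro h
      have hxx : Real.sinh J = S * x := by
        have h2' : Real.sinh ((2 * J) / 2) = S * x := by rw [← h]; exact hcha
        rwa [show (2 : ℝ) * J / 2 = J by ring] at h2'
      have hx1 : x = 1 := by
        rw [← hS_def] at hxx
        have := mul_left_cancel₀ (ne_of_gt hS) (by linarith [hxx] : S * x = S * 1)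
        linarith
      have hcx0 : cx = 0 := by
        have : cx ^ 2 = 0 := by rw [hpx, hx1]; ring
        exact pow_eq_zero_iff (n := 2) (by norm_num) |>.1 this
      rw [hcx0, mul_zero, zero_div]
end
end

section
/- The circumradius J of a cyclic hyperbolic triangle is a smooth function of its side lengths (a,b,c), and it satisfies the chord relations sinh(a/2) = sinh J · sin(θ_a/2), where θ_a is the central angle subtended by the side of length a, with θ_a + θ_b + θ_c = 2π. -/
/-!
STATEMENT 16: The circumradius J of a cyclic hyperbolic triangle is a smooth function of
its side lengths (a,b,c), and it satisfies the chord relations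
sinh(a/2) = sinh J · sin(θ_a/2) where θ_a is the central angle subtended by the side of
length a, with θ_a + θ_b + θ_c = 2π.

Formalized as: given one cyclic triangle datum (side lengths, circumradius J₀ and central
angles satisfying the chord relations and the angle-sum condition), there is a
neighborhood of (a,b,c) on which a smooth function Jf, agreeing with J₀ at (a,b,c),
assigns to each nearby triple of side lengths a circumradius satisfying the chord
relations for suitable central angles summing to 2π.
-/

open Real

noncomputable def Qh (x y z : ℝ) : ℝ := 4*y^2*z^2 - (x^2 - y^2 - z^2)^2

noncomputable def Sh (x y z : ℝ) : ℝ := 2*x*y*z / Real.sqrt (Qh x y z)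

lemma contDiffAt_arsinh' (x : ℝ) : ContDiffAt ℝ (⊤ : ℕ∞) Real.arsinh x := by
  have hg : ContDiffAt ℝ (⊤ : ℕ∞) (fun y : ℝ => y + Real.sqrt (1 + y^2)) x := by
    apply contDiffAt_id.add
    exact (Real.contDiffAt_sqrt (by positivity)).comp x
      (contDiffAt_const.add (contDiffAt_id.pow 2))
  have habs : |x| < Real.sqrt (1 + x^2) := by
    rw [show |x| = Real.sqrt (x^2) from (Real.sqrt_sq_eq_abs x).symm]
    exact Real.sqrt_lt_sqrt (sq_nonneg x) (by linarith)
  have hpos : 0 < x + Real.sqrt (1 + x^2) := by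
    have := neg_abs_le x; linarith
  exact (Real.contDiffAt_log.mpr hpos.ne').comp x hg

lemma exists_angles_sorted (x y z : ℝ) (hx : 0 < x) (hy : 0 < y) (hz : 0 < z)
    (hyx : y ≤ x) (hzx : z ≤ x) (hQ : 0 < Qh x y z) :
    ∃ α β γ : ℝ, α ∈ Set.Ioo 0 π ∧ β ∈ Set.Ioo 0 π ∧ γ ∈ Set.Ioo 0 π ∧
      α + β + γ = π ∧ x = Sh x y z * Real.sin α ∧ y = Sh x y z * Real.sin β ∧
      z = Sh x y z * Real.sin γ := by
  have hq : 0 < Real.sqrt (Qh x y z) := Real.sqrt_pos.mpr hQ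
  set q := Real.sqrt (Qh x y z) with hqdef
  have hq2 : q^2 = Qh x y z := Real.sq_sqrt hQ.le
  have hQdef : Qh x y z = 4*y^2*z^2 - (x^2 - y^2 - z^2)^2 := rfl
  have hSeq : Sh x y z = 2*x*y*z/q := rfl
  set S := Sh x y z with hSdef
  have hS : 0 < S := by rw [hSeq]; positivity
  have hy2 : 0 < x^2 + z^2 - y^2 := by nlinarith
  have hz2 : 0 < x^2 + y^2 - z^2 := by nlinarith
  have hS2 : S^2 = (2*x*y*z)^2/Qh x y z := by rw [hSeq, div_pow, hq2]
  have eSy : S^2 - y^2 = (y*(x^2+z^2-y^2)/q)^2 := by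
    rw [hS2, div_pow, hq2]
    field_simp
    rw [hQdef]; ring
  have eSz : S^2 - z^2 = (z*(x^2+y^2-z^2)/q)^2 := by
    rw [hS2, div_pow, hq2]
    field_simp
    rw [hQdef]; ring
  have hyS : y < S := by
    have h1 : 0 < (y*(x^2+z^2-y^2)/q)^2 := by positivity
    nlinarith
  have hzS : z < S := by
    have h1 : 0 < (z*(x^2+y^2-z^2)/q)^2 := by positivity
    nlinarith
  set β := Real.arcsin (y/S) with hβdef
  set γ := Real.arcsin (z/S) with hγdef
  have hm1 : (-1:ℝ) ≤ y/S := by have := div_pos hy hS; linarith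
  have hm2 : (-1:ℝ) ≤ z/S := by have := div_pos hz hS; linarith
  have hsinβ : Real.sin β = y/S := Real.sin_arcsin hm1 ((div_le_one hS).mpr hyS.le)
  have hsinγ : Real.sin γ = z/S := Real.sin_arcsin hm2 ((div_le_one hS).mpr hzS.le)
  have hcosβ : Real.cos β = y*(x^2+z^2-y^2)/(q*S) := by
    rw [hβdef, Real.cos_arcsin,
      show 1 - (y/S)^2 = (S^2 - y^2)/S^2 by field_simp, eSy,
      show (y*(x^2+z^2-y^2)/q)^2/S^2 = (y*(x^2+z^2-y^2)/(q*S))^2 by ring]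
    exact Real.sqrt_sq (by positivity)
  have hcosγ : Real.cos γ = z*(x^2+y^2-z^2)/(q*S) := by
    rw [hγdef, Real.cos_arcsin,
      show 1 - (z/S)^2 = (S^2 - z^2)/S^2 by field_simp, eSz,
      show (z*(x^2+y^2-z^2)/q)^2/S^2 = (z*(x^2+y^2-z^2)/(q*S))^2 by ring]
    exact Real.sqrt_sq (by positivity)
  have hβpos : 0 < β := Real.arcsin_pos.mpr (by positivity)
  have hγpos : 0 < γ := Real.arcsin_pos.mpr (by positivity)
  have hβlt : β < π/2 := Real.arcsin_lt_pi_div_two.mpr ((div_lt_one hS).mpr hyS)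
  have hγlt : γ < π/2 := Real.arcsin_lt_pi_div_two.mpr ((div_lt_one hS).mpr hzS)
  refine ⟨π - β - γ, β, γ, ⟨by linarith, by linarith [Real.pi_pos]⟩,
    ⟨hβpos, by linarith [Real.pi_pos]⟩, ⟨hγpos, by linarith [Real.pi_pos]⟩, by ring, ?_, ?_, ?_⟩
  · rw [show π - β - γ = π - (β + γ) by ring, Real.sin_pi_sub, Real.sin_add,
      hsinβ, hsinγ, hcosβ, hcosγ, hSeq]
    field_simp
    ring
  · rw [hsinβ]; field_simp
  · rw [hsinγ]; field_simp

lemma exists_angles_gen (x y z : ℝ) (hx : 0 < x) (hy : 0 < y) (hz : 0 < z)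
    (hQ : 0 < Qh x y z) :
    ∃ α β γ : ℝ, α ∈ Set.Ioo 0 π ∧ β ∈ Set.Ioo 0 π ∧ γ ∈ Set.Ioo 0 π ∧
      α + β + γ = π ∧ x = Sh x y z * Real.sin α ∧ y = Sh x y z * Real.sin β ∧
      z = Sh x y z * Real.sin γ := by
  rcases le_total y x with h1 | h1
  · rcases le_total z x with h2 | h2
    · exact exists_angles_sorted x y z hx hy hz h1 h2 hQ
    · -- z is max : z ≥ x ≥ y
      have hQ' : 0 < Qh z x y := by
        rw [show Qh z x y = Qh x y z by unfold Qh; ring]; exact hQ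
      have hSe : Sh z x y = Sh x y z := by
        unfold Sh; rw [show Qh z x y = Qh x y z by unfold Qh; ring]; ring
      obtain ⟨α, β, γ, hα, hβ, hγ, hs, e1, e2, e3⟩ :=
        exists_angles_sorted z x y hz hx hy h2 (h1.trans h2) hQ'
      exact ⟨β, γ, α, hβ, hγ, hα, by linarith, by rw [← hSe]; exact e2,
        by rw [← hSe]; exact e3, by rw [← hSe]; exact e1⟩
  · rcases le_total z y with h2 | h2
    · -- y is max : y ≥ x, y ≥ z
      have hQ' : 0 < Qh y x z := by
        rw [show Qh y x z = Qh x y z by unfold Qh; ring]; exact hQ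
      have hSe : Sh y x z = Sh x y z := by
        unfold Sh; rw [show Qh y x z = Qh x y z by unfold Qh; ring]; ring
      obtain ⟨α, β, γ, hα, hβ, hγ, hs, e1, e2, e3⟩ :=
        exists_angles_sorted y x z hy hx hz h1 h2 hQ'
      exact ⟨β, α, γ, hβ, hα, hγ, by linarith, by rw [← hSe]; exact e2,
        by rw [← hSe]; exact e1, by rw [← hSe]; exact e3⟩
    · -- z is max : z ≥ y ≥ x
      have hQ' : 0 < Qh z x y := by
        rw [show Qh z x y = Qh x y z by unfold Qh; ring]; exact hQ
      have hSe : Sh z x y = Sh x y z := by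
        unfold Sh; rw [show Qh z x y = Qh x y z by unfold Qh; ring]; ring
      obtain ⟨α, β, γ, hα, hβ, hγ, hs, e1, e2, e3⟩ :=
        exists_angles_sorted z x y hz hx hy (h1.trans h2) h2 hQ'
      exact ⟨β, γ, α, hβ, hγ, hα, by linarith, by rw [← hSe]; exact e2,
        by rw [← hSe]; exact e3, by rw [← hSe]; exact e1⟩
theorem circumradius_smooth (a b c J₀ θa θb θc : ℝ)
    (ha : 0 < a) (hb : 0 < b) (hc : 0 < c)
    (hab : a < b + c) (hbc : b < a + c) (hca : c < a + b)
    (hJ : 0 < J₀)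
    (hθa : θa ∈ Set.Ioo 0 (2 * π)) (hθb : θb ∈ Set.Ioo 0 (2 * π))
    (hθc : θc ∈ Set.Ioo 0 (2 * π)) (hsum : θa + θb + θc = 2 * π)
    (hcha : Real.sinh (a / 2) = Real.sinh J₀ * Real.sin (θa / 2))
    (hchb : Real.sinh (b / 2) = Real.sinh J₀ * Real.sin (θb / 2))
    (hchc : Real.sinh (c / 2) = Real.sinh J₀ * Real.sin (θc / 2)) :
    ∃ U ∈ nhds (a, b, c), ∃ Jf : ℝ × ℝ × ℝ → ℝ,
      ContDiffOn ℝ (⊤ : ℕ∞) Jf U ∧ Jf (a, b, c) = J₀ ∧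
      ∀ p ∈ U, 0 < Jf p ∧
        ∃ ta tb tc : ℝ, ta ∈ Set.Ioo 0 (2 * π) ∧ tb ∈ Set.Ioo 0 (2 * π) ∧
          tc ∈ Set.Ioo 0 (2 * π) ∧ ta + tb + tc = 2 * π ∧
          Real.sinh (p.1 / 2) = Real.sinh (Jf p) * Real.sin (ta / 2) ∧
          Real.sinh (p.2.1 / 2) = Real.sinh (Jf p) * Real.sin (tb / 2) ∧
          Real.sinh (p.2.2 / 2) = Real.sinh (Jf p) * Real.sin (tc / 2) := by
  have hπ := Real.pi_pos
  set S₀ := Real.sinh J₀ with hS₀def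
  have hS₀ : 0 < S₀ := Real.sinh_pos_iff.mpr hJ
  have hsa : 0 < Real.sin (θa/2) :=
    Real.sin_pos_of_pos_of_lt_pi (by linarith [hθa.1]) (by linarith [hθa.2])
  have hsb : 0 < Real.sin (θb/2) :=
    Real.sin_pos_of_pos_of_lt_pi (by linarith [hθb.1]) (by linarith [hθb.2])
  have hsc : 0 < Real.sin (θc/2) :=
    Real.sin_pos_of_pos_of_lt_pi (by linarith [hθc.1]) (by linarith [hθc.2])
  have hA : 0 < Real.sinh (a/2) := Real.sinh_pos_iff.mpr (by linarith)
  have hB : 0 < Real.sinh (b/2) := Real.sinh_pos_iff.mpr (by linarith)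
  have hC : 0 < Real.sinh (c/2) := Real.sinh_pos_iff.mpr (by linarith)
  have hsinδ : Real.sin (θa/2) = Real.sin (θb/2 + θc/2) := by
    rw [show θa/2 = π - (θb/2 + θc/2) by linarith, Real.sin_pi_sub]
  have e2 : Real.sin (θa/2)^2 - Real.sin (θb/2)^2 - Real.sin (θc/2)^2
      = 2*Real.sin (θb/2)*Real.sin (θc/2)*Real.cos (θb/2 + θc/2) := by
    rw [hsinδ, Real.sin_add, Real.cos_add]
    linear_combination Real.sin (θb/2)^2 * Real.sin_sq_add_cos_sq (θc/2)
      + Real.sin (θc/2)^2 * Real.sin_sq_add_cos_sq (θb/2)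
  have e4 : 4*Real.sin (θb/2)^2*Real.sin (θc/2)^2
      - (Real.sin (θa/2)^2 - Real.sin (θb/2)^2 - Real.sin (θc/2)^2)^2
      = 4*Real.sin (θa/2)^2*Real.sin (θb/2)^2*Real.sin (θc/2)^2 := by
    rw [e2]
    linear_combination (-(4*Real.sin (θb/2)^2*Real.sin (θc/2)^2))
        * Real.sin_sq_add_cos_sq (θb/2 + θc/2)
      + (-(4*Real.sin (θb/2)^2*Real.sin (θc/2)^2
          * (Real.sin (θa/2) + Real.sin (θb/2 + θc/2)))) * hsinδ
  have hQ1 : Qh (Real.sinh (a/2)) (Real.sinh (b/2)) (Real.sinh (c/2))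
      = (2*S₀^2*(Real.sin (θa/2)*Real.sin (θb/2)*Real.sin (θc/2)))^2 := by
    rw [hcha, hchb, hchc]
    unfold Qh
    linear_combination S₀^4 * e4
  have hQpos : 0 < Qh (Real.sinh (a/2)) (Real.sinh (b/2)) (Real.sinh (c/2)) := by
    rw [hQ1]; positivity
  have hsqrtQ : Real.sqrt (Qh (Real.sinh (a/2)) (Real.sinh (b/2)) (Real.sinh (c/2)))
      = 2*S₀^2*(Real.sin (θa/2)*Real.sin (θb/2)*Real.sin (θc/2)) := by
    rw [hQ1, Real.sqrt_sq (by positivity)]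
  have hSval : Sh (Real.sinh (a/2)) (Real.sinh (b/2)) (Real.sinh (c/2)) = S₀ := by
    unfold Sh
    rw [hsqrtQ, hcha, hchb, hchc]
    field_simp
  -- the neighborhood and the function
  refine ⟨{p : ℝ × ℝ × ℝ | 0 < Real.sinh (p.1/2) ∧ 0 < Real.sinh (p.2.1/2) ∧
      0 < Real.sinh (p.2.2/2) ∧
      0 < Qh (Real.sinh (p.1/2)) (Real.sinh (p.2.1/2)) (Real.sinh (p.2.2/2))}, ?_,
    fun p => Real.arsinh (Sh (Real.sinh (p.1/2)) (Real.sinh (p.2.1/2)) (Real.sinh (p.2.2/2))),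
    ?_, ?_, ?_⟩
  · -- neighborhood
    have hc1 : Continuous fun p : ℝ × ℝ × ℝ => Real.sinh (p.1/2) :=
      Real.continuous_sinh.comp (continuous_fst.div_const 2)
    have hc2 : Continuous fun p : ℝ × ℝ × ℝ => Real.sinh (p.2.1/2) :=
      Real.continuous_sinh.comp ((continuous_fst.comp continuous_snd).div_const 2)
    have hc3 : Continuous fun p : ℝ × ℝ × ℝ => Real.sinh (p.2.2/2) :=
      Real.continuous_sinh.comp ((continuous_snd.comp continuous_snd).div_const 2)
    have hc4 : Continuous fun p : ℝ × ℝ × ℝ =>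
        Qh (Real.sinh (p.1/2)) (Real.sinh (p.2.1/2)) (Real.sinh (p.2.2/2)) := by
      unfold Qh
      exact (((continuous_const.mul (hc2.pow 2)).mul (hc3.pow 2)).sub
        ((((hc1.pow 2).sub (hc2.pow 2)).sub (hc3.pow 2)).pow 2))
    have hopen : IsOpen {p : ℝ × ℝ × ℝ | 0 < Real.sinh (p.1/2) ∧ 0 < Real.sinh (p.2.1/2) ∧
        0 < Real.sinh (p.2.2/2) ∧
        0 < Qh (Real.sinh (p.1/2)) (Real.sinh (p.2.1/2)) (Real.sinh (p.2.2/2))} := by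
      exact ((isOpen_lt continuous_const hc1).and ((isOpen_lt continuous_const hc2).and
        ((isOpen_lt continuous_const hc3).and (isOpen_lt continuous_const hc4))))
    exact hopen.mem_nhds ⟨hA, hB, hC, hQpos⟩
  · -- smoothness
    intro p hp
    apply ContDiffAt.contDiffWithinAt
    have hs1 : ContDiff ℝ (⊤ : ℕ∞) fun p : ℝ × ℝ × ℝ => Real.sinh (p.1/2) :=
      Real.contDiff_sinh.comp (contDiff_fst.div_const 2)
    have hs2 : ContDiff ℝ (⊤ : ℕ∞) fun p : ℝ × ℝ × ℝ => Real.sinh (p.2.1/2) :=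
      Real.contDiff_sinh.comp ((contDiff_fst.comp contDiff_snd).div_const 2)
    have hs3 : ContDiff ℝ (⊤ : ℕ∞) fun p : ℝ × ℝ × ℝ => Real.sinh (p.2.2/2) :=
      Real.contDiff_sinh.comp ((contDiff_snd.comp contDiff_snd).div_const 2)
    have hN : ContDiff ℝ (⊤ : ℕ∞) fun p : ℝ × ℝ × ℝ =>
        2*Real.sinh (p.1/2)*Real.sinh (p.2.1/2)*Real.sinh (p.2.2/2) :=
      ((contDiff_const.mul hs1).mul hs2).mul hs3
    have hD : ContDiff ℝ (⊤ : ℕ∞) fun p : ℝ × ℝ × ℝ =>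
        Qh (Real.sinh (p.1/2)) (Real.sinh (p.2.1/2)) (Real.sinh (p.2.2/2)) := by
      unfold Qh
      exact (((contDiff_const.mul (hs2.pow 2)).mul (hs3.pow 2)).sub
        ((((hs1.pow 2).sub (hs2.pow 2)).sub (hs3.pow 2)).pow 2))
    have hQp : 0 < Qh (Real.sinh (p.1/2)) (Real.sinh (p.2.1/2)) (Real.sinh (p.2.2/2)) :=
      hp.2.2.2
    have hdiv : ContDiffAt ℝ (⊤ : ℕ∞) (fun p : ℝ × ℝ × ℝ =>
        2*Real.sinh (p.1/2)*Real.sinh (p.2.1/2)*Real.sinh (p.2.2/2) /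
          Real.sqrt (Qh (Real.sinh (p.1/2)) (Real.sinh (p.2.1/2)) (Real.sinh (p.2.2/2)))) p :=
      hN.contDiffAt.div ((Real.contDiffAt_sqrt hQp.ne').comp p hD.contDiffAt)
        (Real.sqrt_pos.mpr hQp).ne'
    exact (contDiffAt_arsinh' _).comp p hdiv
  · -- value at the base point
    show Real.arsinh (Sh (Real.sinh (a/2)) (Real.sinh (b/2)) (Real.sinh (c/2))) = J₀
    rw [hSval, hS₀def, Real.arsinh_sinh]
  · -- chord relations
    rintro p ⟨h1, h2, h3, h4⟩
    have hShp : 0 < Sh (Real.sinh (p.1/2)) (Real.sinh (p.2.1/2)) (Real.sinh (p.2.2/2)) := by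
      unfold Sh
      exact div_pos (mul_pos (mul_pos (mul_pos two_pos h1) h2) h3) (Real.sqrt_pos.mpr h4)
    refine ⟨Real.arsinh_pos_iff.mpr hShp, ?_⟩
    obtain ⟨α, β, γ, hα, hβ, hγ, hs, e1, e2, e3⟩ := exists_angles_gen _ _ _ h1 h2 h3 h4
    refine ⟨2*α, 2*β, 2*γ, ⟨by linarith [hα.1], by linarith [hα.2]⟩,
      ⟨by linarith [hβ.1], by linarith [hβ.2]⟩, ⟨by linarith [hγ.1], by linarith [hγ.2]⟩,
      by linarith, ?_, ?_, ?_⟩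
    · rw [Real.sinh_arsinh, show (2*α)/2 = α by ring]; exact e1
    · rw [Real.sinh_arsinh, show (2*β)/2 = β by ring]; exact e2
    · rw [Real.sinh_arsinh, show (2*γ)/2 = γ by ring]; exact e3
end
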